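/- arXiv:2403.16114 — 5 statements merged into one kernel-verified Lean document; each statement's English description precedes it below -/
import Mathlib

section
/- Let m_1,...,m_n be positive integers, t a nonnegative integer, and let B = {(a_{11},...,a_{1m_1},...,a_{n1},...,a_{nm_n}) ∈ Z_{≥0}^{m_1+...+m_n} : for each i, the sum a_{i1}+...+a_{im_i} equals some fixed q_i with 0 ≤ a_{ij} ≤ 2}, where q_1+...+q_n = t and each q_i satisfies 0 ≤ q_i ≤ 2m_i. Then B satisfies the exchange property: for any a, b ∈ B and any pair (i,j) with a_{ij} > b_{ij}, there exists l ∈ {1,...,m_i} with a_{il} < b_{il} such that a − e_{ij} + e_{il} ∈ B, where e_{ij} denotes the standard basis vector in the coordinate (i,j). -/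
open Finset

/-- Index set: pairs (i,j) with 1 ≤ i ≤ n, 1 ≤ j ≤ m i. -/
abbrev Idx (n : ℕ) (m : Fin n → ℕ) := (i : Fin n) × Fin (m i)

/-- The vector a − e_{ij} + e_{il}. -/
def exchStep {n : ℕ} {m : Fin n → ℕ} (a : Idx n m → ℕ) (i : Fin n) (j l : Fin (m i)) :
    Idx n m → ℕ :=
  fun p => if p = ⟨i, j⟩ then a p - 1 else if p = ⟨i, l⟩ then a p + 1 else a p

/-- The generalized bi-exchange property. -/
def BiExchange {n : ℕ} {m : Fin n → ℕ} (B : Set (Idx n m → ℕ)) : Prop :=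
  ∀ a ∈ B, ∀ b ∈ B, ∀ (i : Fin n) (j : Fin (m i)),
    b ⟨i, j⟩ < a ⟨i, j⟩ →
      ∃ l : Fin (m i), a ⟨i, l⟩ < b ⟨i, l⟩ ∧ exchStep a i j l ∈ B

/-!
Since the `i`-th blocks of `a` and `b` have the same sum and `b_{ij} < a_{ij}`, some other entry
satisfies `a_{il} < b_{il}`. Moving one unit from `(i,j)` to `(i,l)` preserves every block sum, and
the only entry that grows becomes `a_{il} + 1 ≤ b_{il} ≤ 2`.
-/

theorem Finset.exists_ne_lt_of_sum_eq_of_lt {ι M : Type*} [DecidableEq ι] [AddCommMonoid M]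
    [LinearOrder M] [IsOrderedCancelAddMonoid M] {s : Finset ι} {f g : ι → M} {j : ι}
    (hj : j ∈ s) (hsum : ∑ i ∈ s, f i = ∑ i ∈ s, g i) (hlt : g j < f j) :
    ∃ l ∈ s, l ≠ j ∧ f l < g l := by
  have hrest : ∑ i ∈ s.erase j, f i < ∑ i ∈ s.erase j, g i := by
    by_contra! hle
    rw [← add_sum_erase s f hj, ← add_sum_erase s g hj] at hsum
    exact (add_lt_add_of_lt_of_le hlt hle).ne' hsum
  obtain ⟨l, hl, hfg⟩ := exists_lt_of_sum_lt hrest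
  exact ⟨l, mem_of_mem_erase hl, ne_of_mem_erase hl, hfg⟩

section exchStep

variable {n : ℕ} {m : Fin n → ℕ} (a : Idx n m → ℕ) {i : Fin n} {j l : Fin (m i)}

theorem exchStep_apply_of_fst_ne {i' : Fin n} (hi : i' ≠ i) (k : Fin (m i')) :
    exchStep a i j l ⟨i', k⟩ = a ⟨i', k⟩ := by
  simp [exchStep, hi]

theorem exchStep_apply_right (hjl : j ≠ l) : exchStep a i j l ⟨i, l⟩ = a ⟨i, l⟩ + 1 := by
  simp [exchStep, hjl.symm]

theorem exchStep_apply_le {p : Idx n m} (hp : p ≠ ⟨i, l⟩) : exchStep a i j l p ≤ a p := by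
  unfold exchStep
  split_ifs <;> omega

/-- `a - e_j + e_l` in the form `(a - e_j + e_l) + e_j = a + e_l`, free of truncated subtraction. -/
theorem exchStep_add_ite (ha : 1 ≤ a ⟨i, j⟩) (hjl : j ≠ l) (k : Fin (m i)) :
    exchStep a i j l ⟨i, k⟩ + (if k = j then 1 else 0) = a ⟨i, k⟩ + (if k = l then 1 else 0) := by
  simp only [exchStep, Sigma.mk.inj_iff, heq_iff_eq, true_and]
  split_ifs <;> subst_vars <;> omega

theorem sum_exchStep (ha : 1 ≤ a ⟨i, j⟩) (hjl : j ≠ l) (i' : Fin n) :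
    ∑ k : Fin (m i'), exchStep a i j l ⟨i', k⟩ = ∑ k : Fin (m i'), a ⟨i', k⟩ := by
  obtain rfl | hi := eq_or_ne i' i
  · have h := sum_congr (s₁ := (univ : Finset (Fin (m i')))) rfl
      fun k _ ↦ exchStep_add_ite a ha hjl k
    simpa only [sum_add_distrib, sum_ite_eq', mem_univ, if_true, add_left_inj] using h
  · exact sum_congr rfl fun k _ ↦ exchStep_apply_of_fst_ne a hi k

end exchStep

theorem stmt0_general {n : ℕ} (m : Fin n → ℕ) (q : Fin n → ℕ) :
    BiExchange {a : Idx n m → ℕ |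
      ∀ i : Fin n, (∑ j : Fin (m i), a ⟨i, j⟩) = q i ∧ ∀ j : Fin (m i), a ⟨i, j⟩ ≤ 2} := by
  intro a ha b hb i j hba
  obtain ⟨l, -, hlj, hab⟩ :=
    exists_ne_lt_of_sum_eq_of_lt (mem_univ j) ((ha i).1.trans (hb i).1.symm) hba
  refine ⟨l, hab, fun i' ↦ ⟨?_, fun k ↦ ?_⟩⟩
  · rw [sum_exchStep a (by omega) hlj.symm]
    exact (ha i').1
  · by_cases hp : (⟨i', k⟩ : Idx n m) = ⟨i, l⟩
    · rw [hp, exchStep_apply_right a hlj.symm]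
      have := (hb i).2 l
      omega
    · exact (exchStep_apply_le a hp).trans ((ha i').2 k)

/-- the Veronese-type set B (block sums q i, entries ≤ 2) satisfies the
generalized bi-exchange property. -/
theorem stmt0 {n : ℕ} (m : Fin n → ℕ) (hm : ∀ i, 1 ≤ m i) (t : ℕ) (q : Fin n → ℕ)
    (hq : ∑ i, q i = t) (hqle : ∀ i, q i ≤ 2 * m i) :
    BiExchange {a : Idx n m → ℕ |
      ∀ i : Fin n, (∑ j : Fin (m i), a ⟨i, j⟩) = q i ∧ ∀ j : Fin (m i), a ⟨i, j⟩ ≤ 2} :=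
  stmt0_general m q
end

section
/- Let B and B' be two sets of bases of generalized discrete bi-polymatroids in Z_{≥0}^{m_1+...+m_n} (i.e., both satisfy the generalized bi-exchange property and all elements of B have equal modulus, likewise for B'). Then the Minkowski sum B + B' = {a + a' : a ∈ B, a' ∈ B'} also satisfies the generalized bi-exchange property: for all c, d ∈ B + B' and each coordinate (i,j) with c_{ij} > d_{ij}, there exists l with c_{il} < d_{il} such that c − e_{ij} + e_{il} ∈ B + B'. -/
open Finset

/-!
Let `c = a + a'` and `d = b + b'` with `c_{ij} > d_{ij}`. Starting from `(a, a')`, walk through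
pairs `u ∈ B`, `u' ∈ B'` with `u + u' = c − e_{ij} + e_{iq}` (stated as
`u + u' + e_{ij} = c + e_{iq}`, avoiding truncated subtraction). If `c_{iq} < d_{iq}`, then
`l = q` is the required exchange. Otherwise `(u + u')_{iq} > d_{iq}`, so `u` exceeds `b` or `u'`
exceeds `b'` at `(i, q)`, and the exchange property of `B` or `B'` moves that unit to some
`(i, l)` where the summand falls short. Each such move lowers the total excess
`∑ (u − b)⁺ + ∑ (u' − b')⁺`, so the walk terminates.
-/

section Exchange

variable {n : ℕ} {m : Fin n → ℕ}

lemma exchStep_add_single (a : Idx n m → ℕ) {i : Fin n} {j l : Fin (m i)} (hjl : j ≠ l)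
    (ha : 0 < a ⟨i, j⟩) :
    exchStep a i j l + Pi.single ⟨i, j⟩ 1 = a + Pi.single ⟨i, l⟩ 1 := by
  funext p
  simp only [exchStep, Pi.add_apply, Pi.single_apply]
  split_ifs <;> simp_all
  omega

lemma sum_tsub_exchStep_lt {a b : Idx n m → ℕ} {i : Fin n} {j l : Fin (m i)}
    (hj : b ⟨i, j⟩ < a ⟨i, j⟩) (hl : a ⟨i, l⟩ < b ⟨i, l⟩) :
    ∑ r, (exchStep a i j l r - b r) < ∑ r, (a r - b r) := by
  refine Finset.sum_lt_sum (fun r _ => ?_) ⟨⟨i, j⟩, mem_univ _, ?_⟩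
  · simp only [exchStep]
    split_ifs with hrj hrl
    · omega
    · subst hrl; omega
    · rfl
  · simp only [exchStep, if_true]
    omega

lemma BiExchange.exists_step {B : Set (Idx n m → ℕ)} (hex : BiExchange B)
    {u b : Idx n m → ℕ} (hu : u ∈ B) (hb : b ∈ B) {i : Fin n} {q : Fin (m i)}
    (hq : b ⟨i, q⟩ < u ⟨i, q⟩) :
    ∃ v ∈ B, ∃ l : Fin (m i), v + Pi.single ⟨i, q⟩ 1 = u + Pi.single ⟨i, l⟩ 1 ∧
      ∑ r, (v r - b r) < ∑ r, (u r - b r) := by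
  obtain ⟨l, hl, hv⟩ := hex u hu b hb i q hq
  have hql : q ≠ l := by rintro rfl; omega
  exact ⟨_, hv, l, exchStep_add_single u hql (by omega), sum_tsub_exchStep_lt hq hl⟩

lemma BiExchange.exists_step_add {B B' : Set (Idx n m → ℕ)} (hex : BiExchange B)
    (hex' : BiExchange B') {u u' b b' : Idx n m → ℕ} (hu : u ∈ B) (hu' : u' ∈ B')
    (hb : b ∈ B) (hb' : b' ∈ B') {i : Fin n} {q : Fin (m i)}
    (hq : b ⟨i, q⟩ + b' ⟨i, q⟩ < u ⟨i, q⟩ + u' ⟨i, q⟩) :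
    ∃ v ∈ B, ∃ v' ∈ B', ∃ l : Fin (m i),
      v + v' + Pi.single ⟨i, q⟩ 1 = u + u' + Pi.single ⟨i, l⟩ 1 ∧
      ∑ r, (v r - b r) + ∑ r, (v' r - b' r) < ∑ r, (u r - b r) + ∑ r, (u' r - b' r) := by
  rcases lt_or_ge (b ⟨i, q⟩) (u ⟨i, q⟩) with hqB | hqB
  · obtain ⟨v, hv, l, heq, hlt⟩ := hex.exists_step hu hb hqB
    refine ⟨v, hv, u', hu', l, ?_, by omega⟩
    rw [add_right_comm, heq, add_right_comm]
  · have hqB' : b' ⟨i, q⟩ < u' ⟨i, q⟩ := by omega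
    obtain ⟨v', hv', l, heq, hlt⟩ := hex'.exists_step hu' hb' hqB'
    refine ⟨u, hu, v', hv', l, ?_, by omega⟩
    rw [add_assoc, heq, add_assoc]

theorem BiExchange.exists_exchange_add_of_eq {B B' : Set (Idx n m → ℕ)} (hex : BiExchange B)
    (hex' : BiExchange B') {b b' c : Idx n m → ℕ} (hb : b ∈ B) (hb' : b' ∈ B')
    {i : Fin n} {j : Fin (m i)} (hj : b ⟨i, j⟩ + b' ⟨i, j⟩ < c ⟨i, j⟩)
    (u : Idx n m → ℕ) (hu : u ∈ B) (u' : Idx n m → ℕ) (hu' : u' ∈ B') (q : Fin (m i))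
    (huc : u + u' + Pi.single ⟨i, j⟩ 1 = c + Pi.single ⟨i, q⟩ 1) :
    ∃ l : Fin (m i), c ⟨i, l⟩ < b ⟨i, l⟩ + b' ⟨i, l⟩ ∧
      ∃ a ∈ B, ∃ a' ∈ B', exchStep c i j l = a + a' := by
  have hucq := congrFun huc ⟨i, q⟩
  simp only [Pi.add_apply, Pi.single_eq_same, Pi.single_apply, Sigma.mk.injEq, heq_eq_eq,
    true_and] at hucq
  by_cases hdone : c ⟨i, q⟩ < b ⟨i, q⟩ + b' ⟨i, q⟩
  · have hjq : j ≠ q := by rintro rfl; omega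
    refine ⟨q, hdone, u, hu, u', hu', add_right_cancel (b := Pi.single ⟨i, j⟩ 1) ?_⟩
    rw [huc, exchStep_add_single c hjq (by omega)]
  · have hq : b ⟨i, q⟩ + b' ⟨i, q⟩ < u ⟨i, q⟩ + u' ⟨i, q⟩ := by
      split_ifs at hucq with hqj
      · subst hqj; omega
      · omega
    obtain ⟨v, hv, v', hv', l, heq, hlt⟩ := hex.exists_step_add hex' hu hu' hb hb' hq
    refine hex.exists_exchange_add_of_eq hex' hb hb' hj v hv v' hv' l
      (add_right_cancel (b := Pi.single ⟨i, q⟩ 1) ?_)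
    rw [add_right_comm, heq, add_right_comm, huc, add_assoc, add_assoc, add_comm (Pi.single _ _)]
termination_by ∑ r, (u r - b r) + ∑ r, (u' r - b' r)

end Exchange

theorem stmt3_general {n : ℕ} {m : Fin n → ℕ} (B B' : Set (Idx n m → ℕ))
    (hex : BiExchange B) (hex' : BiExchange B') :
    BiExchange {c : Idx n m → ℕ | ∃ a ∈ B, ∃ a' ∈ B', c = a + a'} := by
  rintro _ ⟨a, ha, a', ha', rfl⟩ _ ⟨b, hb, b', hb', rfl⟩ i j hj
  exact hex.exists_exchange_add_of_eq hex' hb hb' hj a ha a' ha' j rfl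

/-- the Minkowski sum of two sets of bases of generalized discrete
bi-polymatroids satisfies the generalized bi-exchange property. -/
theorem stmt3 {n : ℕ} {m : Fin n → ℕ} (B B' : Set (Idx n m → ℕ)) (t t' : ℕ)
    (hmod : ∀ a ∈ B, (∑ p, a p) = t) (hmod' : ∀ a ∈ B', (∑ p, a p) = t')
    (hex : BiExchange B) (hex' : BiExchange B') :
    BiExchange {c : Idx n m → ℕ | ∃ a ∈ B, ∃ a' ∈ B', c = a + a'} :=
  stmt3_general B B' hex hex'
end

section
/- Let B ⊆ Z_{≥0}^{m_1+...+m_n} be the set of bases of a generalized discrete bi-polymatroid (all elements of equal modulus, satisfying the generalized bi-exchange property). Then for every positive integer k, the k-fold Minkowski sum kB = {a_1 + ... + a_k : a_1,...,a_k ∈ B} also satisfies the generalized bi-exchange property. -/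
open Finset

lemma idx_mk_eq {n : ℕ} {m : Fin n → ℕ} {i : Fin n} {a b : Fin (m i)} :
    (⟨i, a⟩ : Idx n m) = ⟨i, b⟩ ↔ a = b := by simp

lemma idx_mk_ne {n : ℕ} {m : Fin n → ℕ} {i : Fin n} {a b : Fin (m i)} (h : a ≠ b) :
    (⟨i, a⟩ : Idx n m) ≠ ⟨i, b⟩ := fun he => h (idx_mk_eq.mp he)

lemma exchStep_j {n : ℕ} {m : Fin n → ℕ} (a : Idx n m → ℕ) (i : Fin n) (j l : Fin (m i)) :
    exchStep a i j l ⟨i, j⟩ = a ⟨i, j⟩ - 1 := by simp [exchStep]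

lemma exchStep_l {n : ℕ} {m : Fin n → ℕ} (a : Idx n m → ℕ) (i : Fin n) {j l : Fin (m i)}
    (hjl : j ≠ l) : exchStep a i j l ⟨i, l⟩ = a ⟨i, l⟩ + 1 := by
  have : (⟨i, l⟩ : Idx n m) ≠ ⟨i, j⟩ := idx_mk_ne (Ne.symm hjl)
  simp [exchStep, this]

lemma exchStep_other {n : ℕ} {m : Fin n → ℕ} (a : Idx n m → ℕ) (i : Fin n)
    {j l : Fin (m i)} {p : Idx n m} (h1 : p ≠ ⟨i, j⟩) (h2 : p ≠ ⟨i, l⟩) :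
    exchStep a i j l p = a p := by simp [exchStep, h1, h2]

/-- Key lemma: strong induction on the total excess of the decomposition `f` over `g`. -/
lemma key {n : ℕ} {m : Fin n → ℕ} {B : Set (Idx n m → ℕ)} (hex : BiExchange B) {k : ℕ} :
    ∀ d (f g : Fin k → (Idx n m → ℕ)), (∀ s, f s ∈ B) → (∀ s, g s ∈ B) →
      (∑ s, ∑ p, (f s p - g s p)) ≤ d →
      ∀ (i : Fin n) (j : Fin (m i)), (∑ s, g s ⟨i, j⟩) < (∑ s, f s ⟨i, j⟩) →
      ∃ l : Fin (m i), (∑ s, f s ⟨i, l⟩) < (∑ s, g s ⟨i, l⟩) ∧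
        ∃ F : Fin k → (Idx n m → ℕ), (∀ s, F s ∈ B) ∧
          exchStep (fun p => ∑ s, f s p) i j l = fun p => ∑ s, F s p := by
  intro d
  induction d with
  | zero =>
    intro f g hf hg hd i j hlt
    exfalso
    have h0 : ∀ s : Fin k, ∀ p : Idx n m, f s p - g s p = 0 := by
      intro s p
      have h1 := Nat.le_zero.mp hd
      have h2 := (Finset.sum_eq_zero_iff.mp h1) s (mem_univ s)
      exact (Finset.sum_eq_zero_iff.mp h2) p (mem_univ p)
    have : (∑ s, f s ⟨i, j⟩) ≤ ∑ s, g s ⟨i, j⟩ := by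
      apply Finset.sum_le_sum
      intro s _
      have := h0 s ⟨i, j⟩
      omega
    omega
  | succ d ih =>
    intro f g hf hg hd i j hlt
    -- find a component where f exceeds g at (i,j)
    obtain ⟨s, -, hs⟩ := Finset.exists_lt_of_sum_lt hlt
    obtain ⟨l, hl, hmem⟩ := hex (f s) (hf s) (g s) (hg s) i j hs
    have hjl : j ≠ l := by
      rintro rfl; omega
    set f' : Idx n m → ℕ := exchStep (f s) i j l with hf'
    set F : Fin k → (Idx n m → ℕ) := Function.update f s f' with hFdef
    have hF : ∀ s', F s' ∈ B := by
      intro s'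
      by_cases h : s' = s
      · subst h; simpa [hFdef] using hmem
      · simpa [hFdef, Function.update_of_ne h] using hf s'
    have hFval : ∀ (s' : Fin k) (p : Idx n m),
        F s' p = Function.update (fun s'' => f s'' p) s (f' p) s' := by
      intro s' p
      by_cases h : s' = s
      · subst h; simp [hFdef]
      · simp [hFdef, Function.update_of_ne h]
    have hsplitF : ∀ p : Idx n m, (∑ s', F s' p) = f' p + ∑ s' ∈ univ.erase s, f s' p := by
      intro p
      calc (∑ s', F s' p) = ∑ s', Function.update (fun s'' => f s'' p) s (f' p) s' := by
            exact Finset.sum_congr rfl fun s' _ => hFval s' p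
        _ = f' p + ∑ s' ∈ univ.erase s, f s' p := by
            rw [← Finset.add_sum_erase _ _ (mem_univ s), Function.update_self]
            refine congrArg _ (Finset.sum_congr rfl fun s' hs' => ?_)
            exact Function.update_of_ne (Finset.ne_of_mem_erase hs') _ _
    have hsplitf : ∀ p : Idx n m, (∑ s', f s' p) = f s p + ∑ s' ∈ univ.erase s, f s' p := by
      intro p
      exact (Finset.add_sum_erase _ _ (mem_univ s)).symm
    have hFsum : ∀ p : Idx n m,
        (∑ s', F s' p) = exchStep (fun p => ∑ s', f s' p) i j l p := by
      intro p
      by_cases h1 : p = ⟨i, j⟩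
      · subst h1
        rw [exchStep_j, hsplitF, hsplitf, hf', exchStep_j]
        omega
      · by_cases h2 : p = ⟨i, l⟩
        · subst h2
          rw [exchStep_l _ _ hjl, hsplitF, hsplitf, hf', exchStep_l _ _ hjl]
          omega
        · rw [exchStep_other _ _ h1 h2, hsplitF, hsplitf, hf', exchStep_other _ _ h1 h2]
    -- the measure strictly decreases
    have hmeas : (∑ s', ∑ p, (F s' p - g s' p)) ≤ d := by
      have hpt : ∀ p : Idx n m,
          (f' p - g s p) + (if p = (⟨i, j⟩ : Idx n m) then 1 else 0) = f s p - g s p := by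
        intro p
        by_cases h1 : p = ⟨i, j⟩
        · subst h1
          rw [if_pos rfl, hf', exchStep_j]; omega
        · by_cases h2 : p = ⟨i, l⟩
          · subst h2
            rw [if_neg h1, hf', exchStep_l _ _ hjl]; omega
          · rw [if_neg h1, hf', exchStep_other _ _ h1 h2]; omega
      have hsumpt : (∑ p, (f' p - g s p)) + 1 = ∑ p, (f s p - g s p) := by
        have := Finset.sum_congr rfl (fun p (_ : p ∈ (univ : Finset (Idx n m))) => hpt p)
        rw [Finset.sum_add_distrib] at this
        simpa using this
      have hFcomp : ∀ s', (∑ p, (F s' p - g s' p)) =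
          if s' = s then ∑ p, (f' p - g s' p) else ∑ p, (f s' p - g s' p) := by
        intro s'
        by_cases h : s' = s
        · subst h; simp [hFdef]
        · simp [hFdef, Function.update_of_ne h, h]
      have h1 : (∑ s', ∑ p, (F s' p - g s' p)) + 1 = ∑ s', ∑ p, (f s' p - g s' p) := by
        rw [← Finset.add_sum_erase _ (fun s' => ∑ p, (F s' p - g s' p)) (mem_univ s),
            ← Finset.add_sum_erase _ (fun s' => ∑ p, (f s' p - g s' p)) (mem_univ s)]
        rw [hFcomp s, if_pos rfl]
        have herase : (∑ s' ∈ univ.erase s, ∑ p, (F s' p - g s' p)) =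
            ∑ s' ∈ univ.erase s, ∑ p, (f s' p - g s' p) := by
          apply Finset.sum_congr rfl
          intro s' hs'
          rw [hFcomp s', if_neg (Finset.ne_of_mem_erase hs')]
        rw [herase]
        omega
      omega
    by_cases hcase : (∑ s', f s' ⟨i, l⟩) < ∑ s', g s' ⟨i, l⟩
    · exact ⟨l, hcase, F, hF, funext fun p => (hFsum p).symm⟩
    · -- recurse at position l
      have hFl : (∑ s', F s' ⟨i, l⟩) = (∑ s', f s' ⟨i, l⟩) + 1 := by
        rw [hFsum ⟨i, l⟩, exchStep_l _ _ hjl]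
      have hFj : (∑ s', F s' ⟨i, j⟩) = (∑ s', f s' ⟨i, j⟩) - 1 := by
        rw [hFsum ⟨i, j⟩, exchStep_j]
      have hlt' : (∑ s', g s' ⟨i, l⟩) < ∑ s', F s' ⟨i, l⟩ := by omega
      obtain ⟨l2, hl2, F2, hF2, heq2⟩ := ih F g hF hg hmeas i l hlt'
      have hl2j : l2 ≠ j := by
        rintro rfl; omega
      have hl2l : l2 ≠ l := by
        rintro rfl; omega
      have hFl2 : (∑ s', F s' ⟨i, l2⟩) = ∑ s', f s' ⟨i, l2⟩ := by
        rw [hFsum ⟨i, l2⟩,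
          exchStep_other _ _ (idx_mk_ne hl2j) (idx_mk_ne hl2l)]
      refine ⟨l2, by omega, F2, hF2, ?_⟩
      rw [← heq2]
      funext p
      by_cases h1 : p = ⟨i, j⟩
      · subst h1
        rw [exchStep_j, exchStep_other _ _ (idx_mk_ne hjl) (idx_mk_ne (Ne.symm hl2j)), hFj]
      · by_cases h2 : p = ⟨i, l⟩
        · subst h2
          rw [exchStep_other _ _ (idx_mk_ne (Ne.symm hjl)) (idx_mk_ne (Ne.symm hl2l)),
            exchStep_j, hFl]
          omega
        · by_cases h3 : p = ⟨i, l2⟩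
          · subst h3
            rw [exchStep_l _ _ (Ne.symm hl2j), exchStep_l _ _ (Ne.symm hl2l).symm.symm, hFl2]
          · rw [exchStep_other _ _ h1 h3, exchStep_other _ _ h2 h3, hFsum p,
              exchStep_other _ _ h1 h2]

/-- every k-fold Minkowski sum of a set of bases of a generalized discrete
bi-polymatroid satisfies the generalized bi-exchange property. -/
theorem stmt4 {n : ℕ} {m : Fin n → ℕ} (B : Set (Idx n m → ℕ)) (t : ℕ)
    (hmod : ∀ a ∈ B, (∑ p, a p) = t) (hex : BiExchange B)
    (k : ℕ) (hk : 1 ≤ k) :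
    BiExchange {c : Idx n m → ℕ |
      ∃ f : Fin k → (Idx n m → ℕ), (∀ i, f i ∈ B) ∧ c = ∑ i, f i} := by
  intro a ha b hb i j hlt
  obtain ⟨f, hf, rfl⟩ := ha
  obtain ⟨g, hg, rfl⟩ := hb
  have hlt' : (∑ s, g s ⟨i, j⟩) < ∑ s, f s ⟨i, j⟩ := by
    simpa [Finset.sum_apply] using hlt
  obtain ⟨l, hll, F, hF, heq⟩ :=
    key hex (∑ s, ∑ p, (f s p - g s p)) f g hf hg le_rfl i j hlt'
  refine ⟨l, by simpa [Finset.sum_apply] using hll, F, hF, ?_⟩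
  funext p
  have := congrFun heq p
  simpa [exchStep, Finset.sum_apply] using this
end

section
/- Let B ⊆ Z_{≥0}^{m_1+...+m_n} be a set of vectors of equal modulus satisfying the generalized bi-exchange property, and fix a coordinate (i0,j0). Let r = max{a_{i0 j0} : a ∈ B} and let B' = {a − r·e_{i0 j0} : a ∈ B, a_{i0 j0} = r}. Then B' satisfies the generalized bi-exchange property, and every element b ∈ B with b written with coordinate (i0,j0) deleted is componentwise ≥ some element of B' with coordinate (i0,j0) deleted; i.e., for each b ∈ B there exists u ∈ B with u_{i0 j0} = r such that u_{ij} ≤ b_{ij} for all (i,j) ≠ (i0,j0). -/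
open Finset

/-!
An exchange of `a` towards `b` moves a unit out of a coordinate where `a > b` into one where
`a < b`, so it never touches a coordinate `q` with `a q ≥ b q`. Hence exchanges between two
vectors with the same `q`-coordinate stay in the fiber of `B` over that value, and they commute
with deleting `q`: this gives the exchange property of the localization. For the domination
claim, start from `a` with maximal `q`-coordinate and exchange towards `b` at coordinates other
than `q` where `a` still exceeds `b`; the total excess `∑ p, (a p - b p)` drops each time, and
`q` is never touched because `b q ≤ a q`.
-/

section
variable {n : ℕ} {m : Fin n → ℕ}

lemma exchStep_apply_of_ne (a : Idx n m → ℕ) {i : Fin n} (j l : Fin (m i)) {p : Idx n m}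
    (hj : p ≠ ⟨i, j⟩) (hl : p ≠ ⟨i, l⟩) : exchStep a i j l p = a p := by
  simp [exchStep, hj, hl]

lemma exchStep_apply_left (a : Idx n m → ℕ) (i : Fin n) (j l : Fin (m i)) :
    exchStep a i j l ⟨i, j⟩ = a ⟨i, j⟩ - 1 := by
  simp [exchStep]

lemma exchStep_update_comm (a : Idx n m → ℕ) {i : Fin n} {j l : Fin (m i)} {q : Idx n m}
    (hj : q ≠ ⟨i, j⟩) (hl : q ≠ ⟨i, l⟩) (c : ℕ) :
    exchStep (Function.update a q c) i j l = Function.update (exchStep a i j l) q c := by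
  funext p
  by_cases hp : p = q
  · subst hp
    simp [exchStep, hj, hl]
  · simp [exchStep, hp]

lemma exchStep_tsub_le {a b : Idx n m → ℕ} {i : Fin n} (j : Fin (m i)) {l : Fin (m i)}
    (hl : a ⟨i, l⟩ < b ⟨i, l⟩) (p : Idx n m) : exchStep a i j l p - b p ≤ a p - b p := by
  unfold exchStep
  split_ifs with hpj hpl
  · omega
  · subst hpl; omega
  · rfl

lemma sum_exchStep_tsub_lt {a b : Idx n m → ℕ} {i : Fin n} {j l : Fin (m i)}
    (hj : b ⟨i, j⟩ < a ⟨i, j⟩) (hl : a ⟨i, l⟩ < b ⟨i, l⟩) :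
    ∑ p, (exchStep a i j l p - b p) < ∑ p, (a p - b p) :=
  Finset.sum_lt_sum (fun p _ => exchStep_tsub_le j hl p)
    ⟨⟨i, j⟩, mem_univ _, by rw [exchStep_apply_left]; omega⟩

namespace BiExchange

variable {B : Set (Idx n m → ℕ)}

lemma fiber (hB : BiExchange B) (q : Idx n m) (r : ℕ) : BiExchange {a ∈ B | a q = r} := by
  rintro a ⟨ha, haq⟩ b ⟨hb, hbq⟩ i j hlt
  obtain ⟨l, hl, hstep⟩ := hB a ha b hb i j hlt
  have hqj : q ≠ ⟨i, j⟩ := by rintro rfl; omega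
  have hql : q ≠ ⟨i, l⟩ := by rintro rfl; omega
  exact ⟨l, hl, hstep, by rw [exchStep_apply_of_ne a j l hqj hql, haq]⟩

lemma image_update (hB : BiExchange B) {q : Idx n m} {r : ℕ} (hBq : ∀ a ∈ B, a q = r)
    (c : ℕ) : BiExchange ((Function.update · q c) '' B) := by
  rintro _ ⟨a, ha, rfl⟩ _ ⟨b, hb, rfl⟩ i j hlt
  simp only at hlt ⊢
  have hqj : q ≠ ⟨i, j⟩ := by rintro rfl; simp at hlt
  rw [Function.update_of_ne hqj.symm, Function.update_of_ne hqj.symm] at hlt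
  obtain ⟨l, hl, hstep⟩ := hB a ha b hb i j hlt
  have hql : q ≠ ⟨i, l⟩ := by rintro rfl; rw [hBq a ha, hBq b hb] at hl; omega
  refine ⟨l, ?_, ⟨_, hstep, (exchStep_update_comm a hqj hql c).symm⟩⟩
  rwa [Function.update_of_ne hql.symm, Function.update_of_ne hql.symm]

theorem exists_eq_and_le_off (hB : BiExchange B) {a b : Idx n m → ℕ} (ha : a ∈ B)
    (hb : b ∈ B) {q : Idx n m} (hq : b q ≤ a q) :
    ∃ u ∈ B, u q = a q ∧ ∀ p ≠ q, u p ≤ b p := by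
  induction hs : ∑ p, (a p - b p) using Nat.strong_induction_on generalizing a with
  | _ s ih =>
    by_cases hle : ∀ p ≠ q, a p ≤ b p
    · exact ⟨a, ha, rfl, hle⟩
    push Not at hle
    obtain ⟨⟨i, j⟩, hqj, hj⟩ := hle
    obtain ⟨l, hl, hstep⟩ := hB a ha b hb i j hj
    have hql : q ≠ ⟨i, l⟩ := by rintro rfl; omega
    have hfix := exchStep_apply_of_ne a j l (Ne.symm hqj) hql
    obtain ⟨u, hu, huq, hub⟩ :=
      ih _ (hs ▸ sum_exchStep_tsub_lt hj hl) hstep (hfix ▸ hq) rfl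
    exact ⟨u, hu, huq.trans hfix, hub⟩

end BiExchange
end

theorem stmt5_general {n : ℕ} {m : Fin n → ℕ} (B : Set (Idx n m → ℕ))
    (hex : BiExchange B)
    (i0 : Fin n) (j0 : Fin (m i0)) (r : ℕ)
    (hub : ∀ a ∈ B, a ⟨i0, j0⟩ ≤ r) (hmax : ∃ a ∈ B, a ⟨i0, j0⟩ = r) :
    BiExchange {c : Idx n m → ℕ | ∃ a ∈ B, a ⟨i0, j0⟩ = r ∧
        c = fun p => if p = ⟨i0, j0⟩ then 0 else a p} ∧
      ∀ b ∈ B, ∃ u ∈ B, u ⟨i0, j0⟩ = r ∧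
        ∀ p : Idx n m, p ≠ ⟨i0, j0⟩ → u p ≤ b p := by
  refine ⟨?_, fun b hb => ?_⟩
  · have hloc : {c : Idx n m → ℕ | ∃ a ∈ B, a ⟨i0, j0⟩ = r ∧
        c = fun p => if p = ⟨i0, j0⟩ then 0 else a p} =
        (Function.update · ⟨i0, j0⟩ 0) '' {a ∈ B | a ⟨i0, j0⟩ = r} := by
      have hupd (a : Idx n m → ℕ) : Function.update a ⟨i0, j0⟩ 0 =
          fun p => if p = ⟨i0, j0⟩ then 0 else a p := funext (Function.update_apply a _ 0)
      ext c
      simp only [Set.mem_ofPred_eq, Set.mem_image, and_assoc, eq_comm, hupd]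
    rw [hloc]
    exact (hex.fiber _ r).image_update (fun a ha => ha.2) 0
  · obtain ⟨a, ha, har⟩ := hmax
    obtain ⟨u, hu, huq, hle⟩ := hex.exists_eq_and_le_off ha hb (har ▸ hub b hb)
    exact ⟨u, hu, huq.trans har, hle⟩

/-- localizing at a variable: the set B' of vectors a − r·e_{i0 j0} with
a ∈ B and a_{i0 j0} = r maximal satisfies the generalized bi-exchange property, and every
b ∈ B dominates, away from (i0,j0), some element of B with maximal (i0,j0)-coordinate. -/
theorem stmt5 {n : ℕ} {m : Fin n → ℕ} (B : Set (Idx n m → ℕ)) (t : ℕ)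
    (hmod : ∀ a ∈ B, (∑ p, a p) = t) (hex : BiExchange B)
    (i0 : Fin n) (j0 : Fin (m i0)) (r : ℕ)
    (hub : ∀ a ∈ B, a ⟨i0, j0⟩ ≤ r) (hmax : ∃ a ∈ B, a ⟨i0, j0⟩ = r) :
    BiExchange {c : Idx n m → ℕ | ∃ a ∈ B, a ⟨i0, j0⟩ = r ∧
        c = fun p => if p = ⟨i0, j0⟩ then 0 else a p} ∧
      ∀ b ∈ B, ∃ u ∈ B, u ⟨i0, j0⟩ = r ∧
        ∀ p : Idx n m, p ≠ ⟨i0, j0⟩ → u p ≤ b p :=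
  stmt5_general B hex i0 j0 r hub hmax
end

section
/- Let B ⊆ Z_{≥0}^{m_1+...+m_n} be a set of vectors all of modulus t satisfying the generalized bi-exchange property, and fix a coordinate (i0,j0). Let r = max{a_{i0 j0} : a ∈ B}. Then the set B'' = {π(a − r·e_{i0 j0}) : a ∈ B, a_{i0 j0} = r}, where π deletes the coordinate (i0,j0), is a set of vectors all of modulus t − r satisfying the generalized bi-exchange property (with respect to the block structure in which block i0 now has size m_{i0} − 1, the other blocks unchanged). -/
open Finset

/-- Block sizes after deleting one coordinate of block i0. -/
def delSize {n : ℕ} (m : Fin n → ℕ) (i0 : Fin n) : Fin n → ℕ :=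
  fun i => if i = i0 then m i0 - 1 else m i

/-- The embedding of the index set with coordinate (i0,j0) deleted into the original
index set (π is the corresponding deletion of the coordinate (i0,j0)). -/
def delEmb {n : ℕ} (m : Fin n → ℕ) (i0 : Fin n) (j0 : Fin (m i0)) :
    Idx n (delSize m i0) → Idx n m :=
  fun p =>
    if h : p.1 = i0 then
      ⟨i0, Fin.cast (Nat.succ_pred_eq_of_pos j0.pos)
        ((Fin.cast (Nat.succ_pred_eq_of_pos j0.pos).symm j0).succAbove
          (Fin.cast (show delSize m i0 p.1 = m i0 - 1 by rw [delSize, if_pos h]) p.2))⟩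
    else ⟨p.1, Fin.cast (show delSize m i0 p.1 = m p.1 by rw [delSize, if_neg h]) p.2⟩

lemma delEmb_fst {n : ℕ} {m : Fin n → ℕ} {i0 : Fin n} {j0 : Fin (m i0)}
    (p : Idx n (delSize m i0)) : (delEmb m i0 j0 p).1 = p.1 := by
  unfold delEmb
  split
  · simp [*]
  · rfl

lemma delEmb_ne {n : ℕ} {m : Fin n → ℕ} {i0 : Fin n} {j0 : Fin (m i0)}
    (p : Idx n (delSize m i0)) : delEmb m i0 j0 p ≠ ⟨i0, j0⟩ := by
  unfold delEmb
  split
  · intro h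
    have h2 := (Sigma.mk.inj_iff.mp h).2
    rw [heq_eq_eq] at h2
    apply Fin.succAbove_ne (Fin.cast (Nat.succ_pred_eq_of_pos j0.pos).symm j0)
      (Fin.cast _ p.2)
    apply Fin.cast_injective (Nat.succ_pred_eq_of_pos j0.pos)
    rw [h2]
    ext
    simp
  · intro h
    exact ‹¬ p.1 = i0› (congrArg Sigma.fst h)

lemma delEmb_inj {n : ℕ} {m : Fin n → ℕ} {i0 : Fin n} {j0 : Fin (m i0)} :
    Function.Injective (delEmb m i0 j0) := by
  rintro ⟨pi, pj⟩ ⟨qi, qj⟩ h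
  unfold delEmb at h
  dsimp at h
  split_ifs at h with h1 h2 h2
  · subst h1; subst h2
    have h2 := (Sigma.mk.inj_iff.mp h).2
    rw [heq_eq_eq] at h2
    have := Fin.cast_injective _ h2
    have := Fin.succAbove_right_injective this
    have := Fin.cast_injective _ this
    rw [this]
  · exact absurd (show qi = i0 from (congrArg Sigma.fst h).symm) h2
  · exact absurd (show pi = i0 from congrArg Sigma.fst h) h1
  · have h0 := congrArg Sigma.fst h
    dsimp at h0
    subst h0
    have h2 := (Sigma.mk.inj_iff.mp h).2
    rw [heq_eq_eq] at h2
    have := Fin.cast_injective _ h2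
    rw [this]

lemma card_del {n : ℕ} (m : Fin n → ℕ) (i0 : Fin n) (j0 : Fin (m i0)) :
    Fintype.card (Idx n (delSize m i0)) + 1 = Fintype.card (Idx n m) := by
  rw [Fintype.card_sigma, Fintype.card_sigma]
  simp only [Fintype.card_fin]
  rw [← Finset.add_sum_erase _ _ (Finset.mem_univ i0),
      ← Finset.add_sum_erase _ (fun i => m i) (Finset.mem_univ i0)]
  have h1 : ∀ i ∈ Finset.univ.erase i0, delSize m i0 i = m i := by
    intro i hi
    rw [delSize, if_neg (Finset.ne_of_mem_erase hi)]
  rw [Finset.sum_congr rfl h1]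
  have : delSize m i0 i0 = m i0 - 1 := by rw [delSize, if_pos rfl]
  rw [this]
  have := j0.pos
  have heq : (Finset.univ.erase i0).sum m = ∑ x ∈ Finset.univ.erase i0, m x := rfl
  omega

lemma delEmb_image {n : ℕ} (m : Fin n → ℕ) (i0 : Fin n) (j0 : Fin (m i0)) :
    Finset.univ.image (delEmb m i0 j0) = Finset.univ.erase ⟨i0, j0⟩ := by
  apply Finset.eq_of_subset_of_card_le
  · intro q hq
    rw [Finset.mem_image] at hq
    obtain ⟨p, _, rfl⟩ := hq
    exact Finset.mem_erase.mpr ⟨delEmb_ne p, Finset.mem_univ _⟩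
  · rw [Finset.card_erase_of_mem (Finset.mem_univ _),
        Finset.card_image_of_injective _ delEmb_inj]
    simp only [Finset.card_univ]
    have := card_del m i0 j0
    omega

lemma delEmb_sum {n : ℕ} {m : Fin n → ℕ} {i0 : Fin n} {j0 : Fin (m i0)}
    (a : Idx n m → ℕ) :
    a ⟨i0, j0⟩ + ∑ p, a (delEmb m i0 j0 p) = ∑ q, a q := by
  rw [← Finset.sum_image (f := a) (g := delEmb m i0 j0)
      (fun x _ y _ h => delEmb_inj h), delEmb_image,
      Finset.add_sum_erase _ a (Finset.mem_univ _)]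

lemma delEmb_surj {n : ℕ} {m : Fin n → ℕ} {i0 : Fin n} {j0 : Fin (m i0)}
    (q : Idx n m) (hq : q ≠ ⟨i0, j0⟩) : ∃ p, delEmb m i0 j0 p = q := by
  have : q ∈ Finset.univ.image (delEmb m i0 j0) := by
    rw [delEmb_image]; exact Finset.mem_erase.mpr ⟨hq, Finset.mem_univ _⟩
  obtain ⟨p, _, hp⟩ := Finset.mem_image.mp this
  exact ⟨p, hp⟩

/-- deleting the coordinate (i0,j0) from the elements of B attaining the
maximal value r at (i0,j0) yields a set of vectors of modulus t − r satisfying the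
generalized bi-exchange property for the block sizes m₁,…,m_{i0}−1,…,m_n. -/
theorem stmt17 {n : ℕ} {m : Fin n → ℕ} (B : Set (Idx n m → ℕ)) (t : ℕ)
    (hmod : ∀ a ∈ B, (∑ p, a p) = t) (hex : BiExchange B)
    (i0 : Fin n) (j0 : Fin (m i0)) (r : ℕ)
    (hub : ∀ a ∈ B, a ⟨i0, j0⟩ ≤ r) (hmax : ∃ a ∈ B, a ⟨i0, j0⟩ = r)
    (B'' : Set (Idx n (delSize m i0) → ℕ))
    (hB'' : B'' = {c | ∃ a ∈ B, a ⟨i0, j0⟩ = r ∧ c = fun p => a (delEmb m i0 j0 p)}) :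
    (∀ c ∈ B'', (∑ p, c p) = t - r) ∧ BiExchange B'' := by
  subst hB''
  constructor
  · rintro c ⟨a, ha, har, rfl⟩
    dsimp only
    have hs := delEmb_sum (i0 := i0) (j0 := j0) a
    rw [hmod a ha] at hs
    omega
  · rintro c ⟨a, ha, har, rfl⟩ d ⟨b, hb, hbr, rfl⟩ i j hlt
    dsimp only at hlt ⊢
    set q := delEmb m i0 j0 ⟨i, j⟩ with hqdef
    have hq1 : q.1 = i := delEmb_fst _
    have hqne : q ≠ ⟨i0, j0⟩ := hqdef ▸ delEmb_ne _
    have hlt' : b ⟨q.1, q.2⟩ < a ⟨q.1, q.2⟩ := by rw [Sigma.eta]; exact hlt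
    obtain ⟨l, hal, hmem⟩ := hex a ha b hb q.1 q.2 hlt'
    have hne : (⟨q.1, l⟩ : Idx n m) ≠ ⟨i0, j0⟩ := by
      intro h
      rw [h] at hal
      rw [har, hbr] at hal
      exact lt_irrefl _ hal
    obtain ⟨p', hp'⟩ := delEmb_surj _ hne
    obtain ⟨p1, l'⟩ := p'
    have hfst : q.1 = p1 := by
      have h := delEmb_fst (m := m) (i0 := i0) (j0 := j0) ⟨p1, l'⟩
      rw [hp'] at h
      exact h
    have hp1 : p1 = i := hfst.symm.trans hq1
    subst hp1
    refine ⟨l', ?_, ?_⟩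
    · rw [hp']
      exact hal
    · rw [Set.mem_setOf_eq]
      refine ⟨exchStep a q.1 q.2 l, hmem, ?_, ?_⟩
      · show (if (⟨i0, j0⟩ : Idx n m) = ⟨q.1, q.2⟩ then a ⟨i0, j0⟩ - 1
          else if (⟨i0, j0⟩ : Idx n m) = ⟨q.1, l⟩ then a ⟨i0, j0⟩ + 1 else a ⟨i0, j0⟩) = r
        rw [if_neg, if_neg]
        · exact har
        · intro h; exact hne h.symm
        · intro h; rw [Sigma.eta] at h; exact hqne h.symm
      · funext p
        have e1 : (p = ⟨p1, j⟩) ↔ delEmb m i0 j0 p = ⟨q.1, q.2⟩ := by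
          rw [Sigma.eta, hqdef]
          exact ⟨fun h => by rw [h], fun h => delEmb_inj h⟩
        have e2 : (p = ⟨p1, l'⟩) ↔ delEmb m i0 j0 p = ⟨q.1, l⟩ := by
          rw [← hp']
          exact ⟨fun h => by rw [h], fun h => delEmb_inj h⟩
        simp only [exchStep]
        split_ifs with h1 h2 h3 h4 h5 <;> first | rfl | (exfalso; tauto)
end
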